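/- Let M : ℕ → ℝ be a weight sequence in the class LC. Then the associated weight function ω_M satisfies (ω7), i.e. there exist H > 0, C ≥ 1 and t₀ ≥ 0 such that ω_M(t²) ≤ C·ω_M(H·t) + C for all t ≥ t₀, if and only if there exist a positive integer L (necessarily L ≥ 2) and constants A, B ≥ 1 such that (M_p)^{2L} ≤ A·B^p·M_{L·p} for all p ∈ ℕ. Moreover, this condition implies that there exists a positive integer L with lim_{p→∞} (M_{L·p})^{1/(L·p)} / (M_p)^{1/p} = +∞. -/

import Mathlib

open Filter Real Asymptotics

/-- The associated weight function of a weight sequence `M`. -/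
noncomputable def omegaM (M : ℕ → ℝ) (t : ℝ) : ℝ :=
  if t = 0 then 0 else ⨆ p : ℕ, Real.log (t ^ p / M p)

/-- The class `LC`: positive, normalized, log-convex weight sequences whose
`p`-th roots tend to infinity. -/
def IsLC (M : ℕ → ℝ) : Prop :=
  (∀ p, 0 < M p) ∧ M 0 = 1 ∧ M 0 ≤ M 1 ∧
  (∀ p : ℕ, 1 ≤ p → (M p) ^ 2 ≤ M (p - 1) * M (p + 1)) ∧
  Filter.Tendsto (fun p : ℕ => (M p) ^ (1 / (p : ℝ))) Filter.atTop Filter.atTop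

/-- The quotient sequence `μ_0 = 1`, `μ_p = M_p / M_{p-1}`. -/
noncomputable def mu (M : ℕ → ℝ) (p : ℕ) : ℝ :=
  if p = 0 then 1 else M p / M (p - 1)

/-- Moderate growth `(mg)`. -/
def HasMG (M : ℕ → ℝ) : Prop :=
  ∃ C : ℝ, 1 ≤ C ∧ ∀ p q : ℕ, M (p + q) ≤ C ^ (p + q) * M p * M q

/-- `m_p := M_p / p!`. -/
noncomputable def mseq (M : ℕ → ℝ) (p : ℕ) : ℝ := M p / (Nat.factorial p)

/-- Young conjugate of `x ↦ ω_M(eˣ)`. -/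
noncomputable def phiStar (M : ℕ → ℝ) (y : ℝ) : ℝ :=
  sSup ((fun x => x * y - omegaM M (Real.exp x)) '' Set.Ici (0 : ℝ))

/-- The weight matrix associated with `ω_M`: `M^{(l)}_p := exp((1/l)·φ*(l·p))`. -/
noncomputable def MMat (M : ℕ → ℝ) (l : ℝ) (p : ℕ) : ℝ :=
  Real.exp ((1 / l) * phiStar M (l * p))

/-- `m^{(l)}_p := M^{(l)}_p / p!`. -/
noncomputable def mMat (M : ℕ → ℝ) (l : ℝ) (p : ℕ) : ℝ :=
  MMat M l p / (Nat.factorial p)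

/-- The Roumieu root-almost-increasing condition `(M_{rai})` for the weight matrix
associated with `ω_M`. -/
def MRai (M : ℕ → ℝ) : Prop :=
  ∀ x : ℝ, 0 < x → ∃ C : ℝ, 0 < C ∧ ∃ y : ℝ, 0 < y ∧
    ∀ p q : ℕ, 1 ≤ p → p ≤ q →
      (mMat M x p) ^ (1 / (p : ℝ)) ≤ C * (mMat M y q) ^ (1 / (q : ℝ))

/-- `M ≼ N` : `sup_{p ≥ 1} (M_p/N_p)^{1/p} < ∞`. -/
def Precsim (M N : ℕ → ℝ) : Prop :=
  ∃ A : ℝ, ∀ p : ℕ, 1 ≤ p → (M p / N p) ^ (1 / (p : ℝ)) ≤ A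

/-- `M ≈ N` : mutual `≼`. -/
def Approx (M N : ℕ → ℝ) : Prop := Precsim M N ∧ Precsim N M

/-- Condition `(ω1)` for a weight function. -/
def Omega1 (w : ℝ → ℝ) : Prop :=
  ∃ L : ℝ, 1 ≤ L ∧ ∀ t : ℝ, 0 ≤ t → w (2 * t) ≤ L * (w t + 1)

/-- Condition `(α0)` (in the rewritten form valid for all `t ≥ 0`). -/
def Alpha0 (w : ℝ → ℝ) : Prop :=
  ∃ C : ℝ, 1 ≤ C ∧ ∃ D : ℝ, 1 ≤ D ∧ ∀ lam : ℝ, 1 ≤ lam → ∀ t : ℝ, 0 ≤ t →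
    w (lam * t) ≤ C * lam * w t + D * lam

/-!
For `μ_q ≤ t ≤ μ_{q+1}` one has `ω_M(t) = q log t - log M_q`. Evaluating `(ω7)` at
`t = μ_{p+1} / H`, where `ω_M(H t)` is given by this formula, and bounding `ω_M(t²)` from below
by its `L p`-th term with `C ≤ 2L` yields `M_p^{2L} ≤ e^C H^{2Lp} M_{Lp}` for large `p`.
Conversely, writing an index as `L p ≤ r < L (p + 1)`, the condition bounds the `r`-th term of
`ω_M(t²)` by the `p`-th and the first term of `ω_M(B t)`, whence `ω_M(t²) ≤ 4L ω_M(B t) + D`.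
Taking `L p`-th roots of the condition gives `(M_p^{1/p})² ≤ c M_{Lp}^{1/(Lp)}`, so the quotient
dominates `M_p^{1/p} / c → ∞`.
-/

theorem omegaM_eq_iSup {M : ℕ → ℝ} (hpos : ∀ p, 0 < M p) {t : ℝ} (ht : 0 < t) :
    omegaM M t = ⨆ p : ℕ, (p * log t - log (M p)) := by
  simp only [omegaM, if_neg ht.ne', Real.log_div (pow_ne_zero _ ht.ne') (hpos _).ne',
    Real.log_pow]

theorem omegaM_le_of_forall {M : ℕ → ℝ} (hpos : ∀ p, 0 < M p) {t a : ℝ} (ht : 0 < t)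
    (h : ∀ p : ℕ, p * log t - log (M p) ≤ a) : omegaM M t ≤ a := by
  rw [omegaM_eq_iSup hpos ht]
  exact ciSup_le h

theorem exists_forall_le_mul_of_eventually_le {f g : ℕ → ℝ} (hf : ∀ p, 0 ≤ f p)
    (hg : ∀ p, 0 < g p) {A : ℝ} (h : ∀ᶠ p in atTop, f p ≤ A * g p) :
    ∃ A', 1 ≤ A' ∧ ∀ p, f p ≤ A' * g p := by
  have hO : f =O[cofinite] g := by
    rw [Nat.cofinite_eq_atTop]
    refine IsBigO.of_bound A ?_
    filter_upwards [h] with p hp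
    rwa [Real.norm_of_nonneg (hf p), Real.norm_of_nonneg (hg p).le]
  obtain ⟨c, hc⟩ := (isBigO_cofinite_iff fun p hp => absurd hp (hg p).ne').1 hO
  refine ⟨max c 1, le_max_right _ _, fun p => ?_⟩
  have := hc p
  rw [Real.norm_of_nonneg (hf p), Real.norm_of_nonneg (hg p).le] at this
  exact this.trans (mul_le_mul_of_nonneg_right (le_max_left _ _) (hg p).le)

theorem sq_rpow_le_of_pow_le {M : ℕ → ℝ} (hpos : ∀ p, 0 < M p) {L : ℕ} (hL : 1 ≤ L) {A B : ℝ}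
    (hA : 1 ≤ A) (hB : 0 < B) (hcond : ∀ p, M p ^ (2 * L) ≤ A * B ^ p * M (L * p)) {p : ℕ}
    (hp : 1 ≤ p) :
    (M p ^ (1 / (p : ℝ))) ^ 2 ≤ A * B ^ (1 / (L : ℝ)) * M (L * p) ^ (1 / ((L : ℝ) * p)) := by
  have hLp : L * p ≠ 0 := Nat.mul_ne_zero (by omega) (by omega)
  have hx : (M p ^ (1 / (p : ℝ))) ^ p = M p :=
    one_div (p : ℝ) ▸ Real.rpow_inv_natCast_pow (hpos p).le (by omega)
  have hy : (M (L * p) ^ (1 / ((L : ℝ) * p))) ^ (L * p) = M (L * p) := by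
    rw [one_div, ← Nat.cast_mul]; exact Real.rpow_inv_natCast_pow (hpos _).le hLp
  have hb : (B ^ (1 / (L : ℝ))) ^ L = B :=
    one_div (L : ℝ) ▸ Real.rpow_inv_natCast_pow hB.le (by omega)
  have hA0 : 0 < A := zero_lt_one.trans_le hA
  have hMLp := hpos (L * p)
  rw [← pow_le_pow_iff_left₀ (by positivity) (by positivity) hLp]
  calc ((M p ^ (1 / (p : ℝ))) ^ 2) ^ (L * p) = ((M p ^ (1 / (p : ℝ))) ^ p) ^ (2 * L) := by
        rw [← pow_mul, ← pow_mul]; ring_nf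
    _ = M p ^ (2 * L) := by rw [hx]
    _ ≤ A * B ^ p * M (L * p) := hcond p
    _ ≤ A ^ (L * p) * ((B ^ (1 / (L : ℝ))) ^ L) ^ p * M (L * p) := by
        rw [hb]
        exact mul_le_mul_of_nonneg_right
          (mul_le_mul_of_nonneg_right (le_self_pow₀ hA hLp) (by positivity)) (hpos _).le
    _ = (A * B ^ (1 / (L : ℝ)) * M (L * p) ^ (1 / ((L : ℝ) * p))) ^ (L * p) := by
        rw [mul_pow, mul_pow, hy, ← pow_mul, mul_comm L p]

theorem tendsto_rpow_div_rpow_of_pow_le {M : ℕ → ℝ} (hpos : ∀ p, 0 < M p)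
    (hroot : Tendsto (fun p : ℕ => M p ^ (1 / (p : ℝ))) atTop atTop) {L : ℕ} (hL : 1 ≤ L)
    {A B : ℝ} (hA : 1 ≤ A) (hB : 0 < B) (hcond : ∀ p, M p ^ (2 * L) ≤ A * B ^ p * M (L * p)) :
    Tendsto (fun p : ℕ => M (L * p) ^ (1 / ((L : ℝ) * p)) / M p ^ (1 / (p : ℝ))) atTop atTop := by
  have hc : 0 < A * B ^ (1 / (L : ℝ)) := by positivity
  refine tendsto_atTop_mono' _ ?_ (hroot.atTop_div_const hc)
  filter_upwards [eventually_ge_atTop 1] with p hp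
  have hx : 0 < M p ^ (1 / (p : ℝ)) := Real.rpow_pos_of_pos (hpos p) _
  rw [div_le_div_iff₀ hc hx, ← sq, mul_comm _ (A * _)]
  exact sq_rpow_le_of_pow_le hpos hL hA hB hcond hp

namespace IsLC

variable {M : ℕ → ℝ}

theorem pos (hM : IsLC M) (p : ℕ) : 0 < M p := hM.1 p

theorem mul_mu_succ (hM : IsLC M) (p : ℕ) : mu M (p + 1) * M p = M (p + 1) := by
  simp only [mu, Nat.add_sub_cancel, if_neg p.succ_ne_zero]
  exact div_mul_cancel₀ _ (hM.pos p).ne'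

theorem monotone_mu (hM : IsLC M) : Monotone (mu M) := by
  obtain ⟨hpos, hM0, hM01, hlogconvex, -⟩ := hM
  refine monotone_nat_of_le_succ fun p => ?_
  rcases Nat.eq_zero_or_pos p with rfl | hp
  · simpa [mu, hM0] using hM01
  · simp only [mu, if_neg hp.ne', Nat.add_sub_cancel, if_neg p.succ_ne_zero]
    rw [div_le_div_iff₀ (hpos _) (hpos _)]
    nlinarith [hlogconvex p hp]

theorem one_le_mu (hM : IsLC M) (p : ℕ) : 1 ≤ mu M p := by
  simpa [mu] using hM.monotone_mu (Nat.zero_le p)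

theorem mu_pos (hM : IsLC M) (p : ℕ) : 0 < mu M p :=
  zero_lt_one.trans_le (hM.one_le_mu p)

theorem monotone (hM : IsLC M) : Monotone M :=
  monotone_nat_of_le_succ fun p => by
    rw [← hM.mul_mu_succ p]
    exact le_mul_of_one_le_left (hM.pos p).le (hM.one_le_mu _)

theorem one_le (hM : IsLC M) (p : ℕ) : 1 ≤ M p :=
  hM.2.1 ▸ hM.monotone (Nat.zero_le p)

theorem le_pow_mul {t : ℝ} (hM : IsLC M) (i k : ℕ) (ht : mu M (i + k) ≤ t) :
    M (i + k) ≤ t ^ k * M i := by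
  induction k with
  | zero => simp
  | succ k ih =>
    calc M (i + (k + 1)) = mu M (i + k + 1) * M (i + k) := (hM.mul_mu_succ _).symm
      _ ≤ t * (t ^ k * M i) :=
        mul_le_mul ht (ih ((hM.monotone_mu (by omega)).trans ht)) (hM.pos _).le
          ((hM.mu_pos _).le.trans ht)
      _ = t ^ (k + 1) * M i := by ring

theorem pow_mul_le {t : ℝ} (hM : IsLC M) (q k : ℕ) (ht0 : 0 ≤ t) (ht : t ≤ mu M (q + 1)) :
    t ^ k * M q ≤ M (q + k) := by
  induction k with
  | zero => simp
  | succ k ih =>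
    calc t ^ (k + 1) * M q = t * (t ^ k * M q) := by ring
      _ ≤ mu M (q + k + 1) * M (q + k) :=
        mul_le_mul (ht.trans (hM.monotone_mu (by omega))) ih
          (mul_nonneg (pow_nonneg ht0 k) (hM.pos q).le) (hM.mu_pos _).le
      _ = M (q + (k + 1)) := hM.mul_mu_succ _

theorem le_mu_pow (hM : IsLC M) (p : ℕ) : M p ≤ mu M p ^ p := by
  simpa [hM.2.1] using hM.le_pow_mul 0 p (by simp)

theorem tendsto_mu (hM : IsLC M) : Tendsto (mu M) atTop atTop := by
  refine tendsto_atTop_mono' _ ?_ hM.2.2.2.2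
  filter_upwards [eventually_ge_atTop 1] with p hp
  have hp' : (0 : ℝ) < p := by exact_mod_cast hp
  rw [one_div, Real.rpow_inv_le_iff_of_pos (hM.pos p).le (hM.mu_pos p).le hp',
    Real.rpow_natCast]
  exact hM.le_mu_pow p

theorem bddAbove_range_log (hM : IsLC M) {t : ℝ} (ht : 0 < t) :
    BddAbove (Set.range fun p : ℕ => p * log t - log (M p)) := by
  refine (isBoundedUnder_of_eventually_le (a := 0) ?_).bddAbove_range_of_cofinite
  rw [Nat.cofinite_eq_atTop]
  filter_upwards [hM.2.2.2.2.eventually_ge_atTop t, eventually_ge_atTop 1] with p hroot hp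
  have hp' : (0 : ℝ) < p := by exact_mod_cast hp
  rw [one_div, Real.le_rpow_inv_iff_of_pos ht.le (hM.pos p).le hp', Real.rpow_natCast] at hroot
  have := Real.log_le_log (pow_pos ht p) hroot
  rw [Real.log_pow] at this
  linarith

theorem le_omegaM (hM : IsLC M) {t : ℝ} (ht : 0 < t) (p : ℕ) :
    p * log t - log (M p) ≤ omegaM M t := by
  rw [omegaM_eq_iSup hM.pos ht]
  exact le_ciSup (hM.bddAbove_range_log ht) p

theorem omegaM_nonneg (hM : IsLC M) {t : ℝ} (ht : 1 ≤ t) : 0 ≤ omegaM M t := by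
  simpa [hM.2.1] using hM.le_omegaM (by linarith) 0

theorem omegaM_eq (hM : IsLC M) {t : ℝ} (q : ℕ) (hq : mu M q ≤ t) (hq' : t ≤ mu M (q + 1)) :
    omegaM M t = q * log t - log (M q) := by
  have ht : 0 < t := (hM.mu_pos q).trans_le hq
  refine le_antisymm (omegaM_le_of_forall hM.pos ht fun p => ?_) (hM.le_omegaM ht q)
  suffices t ^ p * M q ≤ t ^ q * M p by
    have := Real.log_le_log (by positivity [hM.pos q]) this
    rw [Real.log_mul (by positivity) (hM.pos _).ne', Real.log_mul (by positivity) (hM.pos _).ne',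
      Real.log_pow, Real.log_pow] at this
    linarith
  rcases le_total p q with hpq | hqp
  · obtain ⟨k, rfl⟩ := Nat.exists_eq_add_of_le hpq
    calc t ^ p * M (p + k) ≤ t ^ p * (t ^ k * M p) := by
          gcongr; exact hM.le_pow_mul p k hq
      _ = t ^ (p + k) * M p := by ring
  · obtain ⟨k, rfl⟩ := Nat.exists_eq_add_of_le hqp
    calc t ^ (q + k) * M q = t ^ q * (t ^ k * M q) := by ring
      _ ≤ t ^ q * M (q + k) := by gcongr; exact hM.pow_mul_le q k ht.le hq'

theorem eventually_pow_le_of_omegaM_sq_le (hM : IsLC M) {H C t₀ : ℝ} (hH : 0 < H)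
    (hω : ∀ t, t₀ ≤ t → omegaM M (t ^ 2) ≤ C * omegaM M (H * t) + C) {L : ℕ}
    (hCL : C ≤ 2 * L) :
    ∀ᶠ p in atTop, M p ^ (2 * L) ≤ exp C * (H ^ (2 * L)) ^ p * M (L * p) := by
  filter_upwards [(hM.tendsto_mu.comp (tendsto_add_atTop_nat 1)).eventually_ge_atTop (H * t₀)]
    with p hp
  set s := mu M (p + 1)
  replace hp : H * t₀ ≤ s := hp
  have hs : 0 < s := hM.mu_pos _
  have hsq : omegaM M ((s / H) ^ 2) ≤ C * omegaM M (H * (s / H)) + C :=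
    hω _ (by rw [le_div_iff₀ hH]; linarith)
  have hmu : mu M p ≤ s := hM.monotone_mu (Nat.le_add_right p 1)
  rw [mul_div_cancel₀ _ hH.ne', hM.omegaM_eq p hmu le_rfl] at hsq
  have hlow := hM.le_omegaM (t := (s / H) ^ 2) (by positivity) (L * p)
  have hMs : log (M p) ≤ p * log s := by
    have := Real.log_le_log (hM.pos p)
      ((hM.le_mu_pow p).trans (pow_le_pow_left₀ (hM.mu_pos p).le hmu p))
    rwa [Real.log_pow] at this
  rw [Real.log_pow, Real.log_div hs.ne' hH.ne'] at hlow
  push_cast at hlow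
  have hslack : (2 * L - C) * log (M p) ≤ (2 * L - C) * (p * log s) :=
    mul_le_mul_of_nonneg_left hMs (by linarith)
  rw [← Real.log_le_log_iff (by positivity [hM.pos p]) (by positivity [hM.pos (L * p)]),
    Real.log_mul (by positivity) (hM.pos _).ne', Real.log_mul (by positivity) (by positivity),
    Real.log_exp, Real.log_pow, Real.log_pow, Real.log_pow]
  push_cast
  linarith

theorem omegaM_sq_le (hM : IsLC M) {L : ℕ} (hL : 1 ≤ L) {A B : ℝ} (hA : 0 < A) (hB : 1 ≤ B)
    (hcond : ∀ p, M p ^ (2 * L) ≤ A * B ^ p * M (L * p)) {t : ℝ} (ht : 1 ≤ t) :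
    omegaM M (t ^ 2) ≤ 4 * L * omegaM M (B * t) + (log A + 2 * L * log (M 1)) := by
  have hBt : 0 < B * t := by positivity
  refine omegaM_le_of_forall hM.pos (by positivity) fun r => ?_
  set p := r / L
  have hLp : L * p ≤ r := Nat.mul_div_le r L
  have hr : (r : ℝ) ≤ L * (p + 1) := by
    exact_mod_cast (Nat.lt_mul_div_succ r (by omega : 0 < L)).le
  have hcond_log : 2 * L * log (M p) ≤ log A + p * log B + log (M (L * p)) := by
    have := Real.log_le_log (by positivity [hM.pos p]) (hcond p)
    rw [Real.log_pow, Real.log_mul (by positivity) (hM.pos _).ne',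
      Real.log_mul hA.ne' (by positivity), Real.log_pow] at this
    push_cast at this
    linarith
  have hωp := hM.le_omegaM hBt p
  have hω1 := hM.le_omegaM hBt 1
  rw [Real.log_mul (by positivity) (by positivity)] at hωp hω1
  have hlogM : log (M (L * p)) ≤ log (M r) := Real.log_le_log (hM.pos _) (hM.monotone hLp)
  have hlogt : 0 ≤ log t := Real.log_nonneg ht
  have hlogB : 0 ≤ log B := Real.log_nonneg hB
  have hL' : (1 : ℝ) ≤ L := by exact_mod_cast hL
  rw [Nat.cast_one, one_mul] at hω1
  rw [Real.log_pow]
  push_cast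
  have h2L : (0 : ℝ) ≤ 2 * L := by positivity
  linarith [mul_le_mul_of_nonneg_right hr hlogt, mul_le_mul_of_nonneg_left hωp h2L,
    mul_le_mul_of_nonneg_left hω1 h2L, mul_nonneg h2L hlogB,
    mul_nonneg (mul_nonneg (by linarith : (0 : ℝ) ≤ 2 * L - 1) p.cast_nonneg) hlogB]

theorem exists_pow_le_of_omegaM_sq_le (hM : IsLC M) {H C t₀ : ℝ} (hH : 0 < H) (hC : 1 ≤ C)
    (hω : ∀ t, t₀ ≤ t → omegaM M (t ^ 2) ≤ C * omegaM M (H * t) + C) :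
    ∃ L : ℕ, 1 ≤ L ∧ ∃ A : ℝ, 1 ≤ A ∧ ∃ B : ℝ, 1 ≤ B ∧
      ∀ p : ℕ, M p ^ (2 * L) ≤ A * B ^ p * M (L * p) := by
  set L := ⌈C⌉₊
  have hL : 1 ≤ L := Nat.one_le_iff_ne_zero.2 (Nat.ceil_pos.2 (by linarith)).ne'
  have hCL : C ≤ 2 * L := by linarith [Nat.le_ceil C, (Nat.cast_nonneg L : (0 : ℝ) ≤ L)]
  set B := max (H ^ (2 * L)) 1
  have hev : ∀ᶠ p in atTop, M p ^ (2 * L) ≤ exp C * (B ^ p * M (L * p)) := by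
    filter_upwards [hM.eventually_pow_le_of_omegaM_sq_le hH hω hCL] with p hp
    calc M p ^ (2 * L) ≤ exp C * (H ^ (2 * L)) ^ p * M (L * p) := hp
      _ ≤ exp C * (B ^ p * M (L * p)) := by
        rw [mul_assoc]; gcongr; exacts [(hM.pos _).le, le_max_left _ _]
  obtain ⟨A, hA, hAB⟩ := exists_forall_le_mul_of_eventually_le (fun p => by positivity [hM.pos p])
    (fun p => by positivity [hM.pos (L * p)]) hev
  exact ⟨L, hL, A, hA, B, le_max_right _ _, fun p => (hAB p).trans_eq (mul_assoc _ _ _).symm⟩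

theorem exists_omegaM_sq_le_of_pow_le (hM : IsLC M) {L : ℕ} (hL : 1 ≤ L) {A B : ℝ} (hA : 1 ≤ A)
    (hB : 1 ≤ B) (hcond : ∀ p, M p ^ (2 * L) ≤ A * B ^ p * M (L * p)) :
    ∃ H : ℝ, 0 < H ∧ ∃ C : ℝ, 1 ≤ C ∧ ∃ t₀ : ℝ, 0 ≤ t₀ ∧ ∀ t : ℝ, t₀ ≤ t →
      omegaM M (t ^ 2) ≤ C * omegaM M (H * t) + C := by
  set D := log A + 2 * L * log (M 1)
  have hD : 0 ≤ D := by
    have := Real.log_nonneg hA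
    have := Real.log_nonneg (hM.one_le 1)
    positivity
  have hL' : (1 : ℝ) ≤ L := by exact_mod_cast hL
  refine ⟨B, by linarith, 4 * L + D, by linarith, 1, zero_le_one, fun t ht => ?_⟩
  have hω := hM.omegaM_nonneg (one_le_mul_of_one_le_of_one_le hB ht)
  calc omegaM M (t ^ 2) ≤ 4 * L * omegaM M (B * t) + D :=
        hM.omegaM_sq_le hL (by linarith) hB hcond ht
    _ ≤ (4 * L + D) * omegaM M (B * t) + (4 * L + D) := by nlinarith

end IsLC

/-- Proposition 6.1: characterization of `(ω7)` for `ω_M`, and the consequence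
that the root quotients tend to infinity along multiples. -/
theorem stmt19 (M : ℕ → ℝ) (hM : IsLC M) :
    ((∃ H : ℝ, 0 < H ∧ ∃ C : ℝ, 1 ≤ C ∧ ∃ t0 : ℝ, 0 ≤ t0 ∧ ∀ t : ℝ, t0 ≤ t →
        omegaM M (t ^ 2) ≤ C * omegaM M (H * t) + C) ↔
      (∃ L : ℕ, 1 ≤ L ∧ ∃ A : ℝ, 1 ≤ A ∧ ∃ B : ℝ, 1 ≤ B ∧
        ∀ p : ℕ, (M p) ^ (2 * L) ≤ A * B ^ p * M (L * p))) ∧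
    ((∃ L : ℕ, 1 ≤ L ∧ ∃ A : ℝ, 1 ≤ A ∧ ∃ B : ℝ, 1 ≤ B ∧
        ∀ p : ℕ, (M p) ^ (2 * L) ≤ A * B ^ p * M (L * p)) →
      ∃ L : ℕ, 1 ≤ L ∧ Filter.Tendsto
        (fun p : ℕ => (M (L * p)) ^ (1 / ((L : ℝ) * p)) / (M p) ^ (1 / (p : ℝ)))
        Filter.atTop Filter.atTop) := by
  refine ⟨⟨?_, ?_⟩, ?_⟩
  · rintro ⟨H, hH, C, hC, t0, -, hω⟩
    exact hM.exists_pow_le_of_omegaM_sq_le hH hC hω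
  · rintro ⟨L, hL, A, hA, B, hB, hcond⟩
    exact hM.exists_omegaM_sq_le_of_pow_le hL hA hB hcond
  · rintro ⟨L, hL, A, hA, B, hB, hcond⟩
    exact ⟨L, hL, tendsto_rpow_div_rpow_of_pow_le hM.pos hM.2.2.2.2 hL hA (by linarith) hcond⟩
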